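/- arXiv:2509.16569 — 3 statements merged into one kernel-verified Lean document; each statement's English description precedes it below -/
import Mathlib

section
/- For any strictly descending tuple a = (a_n, ..., a_0) of nonnegative integers and any prime p, the p-adic valuation of w(a) = ∏_{0 ≤ i < j ≤ n}(a_i - a_j) is at least the p-adic valuation of w((n, n-1, ..., 1, 0)) = ∏_{0 ≤ k ≤ n} k!. That is, v_p(∏_{i<j}(a_i - a_j)) ≥ v_p(∏_{k=0}^n k!). -/
/-! The product `∏_{i<j} (a_j - a_i)` is the Vandermonde determinant of `a`, which is divisible
by the superfactorial `sf n = ∏_{k ≤ n} k!`: subtracting suitable lower columns turns the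
monomials `x^k` into the falling factorials `k! · (x choose k)`. Divisibility of a nonzero number
bounds every `p`-adic valuation. -/

open Finset

theorem padicValNat_le_of_dvd {p m n : ℕ} (hn : n ≠ 0) (h : m ∣ n) :
    padicValNat p m ≤ padicValNat p n := by
  rcases eq_or_ne p 1 with rfl | hp
  · simp
  · exact (padicValNat_dvd_iff_le_of_ne_one hp hn).mp (pow_padicValNat_dvd.trans h)

theorem superFactorial_dvd_prod_Ioi_sub {n : ℕ} {a : Fin (n + 1) → ℕ} (ha : Monotone a) :
    n.superFactorial ∣ ∏ i, ∏ j ∈ Ioi i, (a j - a i) := by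
  have h := Matrix.superFactorial_dvd_vandermonde_det fun i ↦ (a i : ℤ)
  rw [Matrix.det_vandermonde] at h
  have hcast : ∏ i, ∏ j ∈ Ioi i, ((a j : ℤ) - a i) = ((∏ i, ∏ j ∈ Ioi i, (a j - a i) : ℕ) : ℤ) := by
    push_cast
    exact prod_congr rfl fun i _ ↦ prod_congr rfl fun j hj ↦
      (Nat.cast_sub (ha (mem_Ioi.mp hj).le)).symm
  exact_mod_cast hcast ▸ h

theorem stmt_1_general (n : ℕ) (a : Fin (n + 1) → ℕ) (ha : StrictMono a) (p : ℕ) :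
    padicValNat p (∏ k ∈ Finset.range (n + 1), Nat.factorial k) ≤
      padicValNat p (∏ i : Fin (n + 1), ∏ j ∈ Finset.Ioi i, (a j - a i)) := by
  have hne : ∏ i, ∏ j ∈ Ioi i, (a j - a i) ≠ 0 :=
    prod_ne_zero_iff.mpr fun i _ ↦ prod_ne_zero_iff.mpr fun j hj ↦
      Nat.sub_ne_zero_of_lt (ha (mem_Ioi.mp hj))
  rw [Nat.prod_range_succ_factorial]
  exact padicValNat_le_of_dvd hne (superFactorial_dvd_prod_Ioi_sub ha.monotone)

/-- For any strictly descending tuple of nonnegative integers (indexed so that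
`a` is strictly increasing in the index) and any prime `p`, the `p`-adic valuation of
`w(a) = ∏_{i<j} (a_j - a_i)` is at least the `p`-adic valuation of
`w((n, …, 1, 0)) = ∏_{k=0}^n k!`. -/
theorem stmt_1 (n : ℕ) (a : Fin (n + 1) → ℕ) (ha : StrictMono a) (p : ℕ) (hp : p.Prime) :
    padicValNat p (∏ k ∈ Finset.range (n + 1), Nat.factorial k) ≤
      padicValNat p (∏ i : Fin (n + 1), ∏ j ∈ Finset.Ioi i, (a j - a i)) :=
  stmt_1_general n a ha p
end

section
/- Let (A,m) be a 2-dimensional multiarrangement and H ∈ A. Let m + δ_H be the multiplicity that increases m(H) by 1 and leaves other multiplicities unchanged. Then |Δ(A,m) − Δ(A, m + δ_H)| = 1. In particular, if Δ(A,m) = 0, then Δ(A, m ± δ_H) = 1 for every H ∈ A (for m − δ_H assuming m(H) ≥ 2). -/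
/-!
For free `(A, m)`, Saito's criterion makes `Q(A, m)` divide `θ ∧ η` for all logarithmic
derivations `θ, η`, so a nonzero wedge of homogeneous ones of degrees `a, b` has
`a + b ≥ |m|`, while the two exponents of `m` sum to exactly `|m|`. Since
`D(A, m + δ_H) ⊆ D(A, m)` and a nonzero derivation cannot be parallel to both members of a
basis, testing each basis member of one multiplicity against the basis of the other gives
`min d ≤ min e` and `max d ≤ max e`. As `e₁ + e₂ = d₁ + d₂ + 1`, exactly one of the two
exponents grows by one, which moves `Δ` by exactly one.
-/

open MvPolynomial

noncomputable section

/-- Membership in the logarithmic derivation module `D(A,m)` of a 2-dimensional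
multiarrangement whose `i`-th line is the kernel of the linear form
`(co i).1 * x + (co i).2 * y` with multiplicity `m i`.  A derivation
`θ = f ∂_x + g ∂_y` is encoded as the pair `(f, g)`; it is logarithmic iff
`θ(α_H) ∈ α_H^{m(H)} S` for every line `H`. -/
def MemD {K : Type*} [Field K] {n : ℕ} (co : Fin n → K × K) (m : Fin n → ℕ)
    (θ : MvPolynomial (Fin 2) K × MvPolynomial (Fin 2) K) : Prop :=
  ∀ i, (C (co i).1 * X 0 + C (co i).2 * X 1) ^ (m i) ∣
    (C (co i).1 * θ.1 + C (co i).2 * θ.2)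

/-- The defining polynomial `Q(A,m) = ∏_H α_H^{m(H)}` of the multiarrangement. -/
def Qpoly {K : Type*} [Field K] {n : ℕ} (co : Fin n → K × K) (m : Fin n → ℕ) :
    MvPolynomial (Fin 2) K :=
  ∏ i, (C (co i).1 * X 0 + C (co i).2 * X 1) ^ (m i)

/-- `(A, m)` is free with exponents `(d₁, d₂)`: by Saito's criterion this means there are
homogeneous logarithmic derivations `θ₁, θ₂` of degrees `d₁, d₂` whose coefficient
determinant is a nonzero scalar multiple of `Q(A,m)`; such `θ₁, θ₂` form a homogeneous
basis of the rank-2 free module `D(A,m)`. -/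
def IsExp {K : Type*} [Field K] {n : ℕ} (co : Fin n → K × K) (m : Fin n → ℕ)
    (d₁ d₂ : ℕ) : Prop :=
  ∃ θ₁ θ₂ : MvPolynomial (Fin 2) K × MvPolynomial (Fin 2) K,
    MemD co m θ₁ ∧ MemD co m θ₂ ∧
    θ₁.1.IsHomogeneous d₁ ∧ θ₁.2.IsHomogeneous d₁ ∧
    θ₂.1.IsHomogeneous d₂ ∧ θ₂.2.IsHomogeneous d₂ ∧
    ∃ c : K, c ≠ 0 ∧ θ₁.1 * θ₂.2 - θ₁.2 * θ₂.1 = C c * Qpoly co m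

/-- `MemD` and `Qpoly` are stated in terms of `linForm (co i)`, unfolded. -/
def linForm {K : Type*} [Field K] (v : K × K) : MvPolynomial (Fin 2) K :=
  C v.1 * X 0 + C v.2 * X 1

/-- The coefficient determinant `θ ∧ η` of `θ = θ.1 ∂_x + θ.2 ∂_y` and `η`. -/
def wedge {R : Type*} [CommRing R] (θ η : R × R) : R :=
  θ.1 * η.2 - θ.2 * η.1

section Wedge

variable {R : Type*} [CommRing R]

lemma wedge_ne_zero_or_wedge_ne_zero [NoZeroDivisors R] {θ η φ : R × R} (h : wedge θ η ≠ 0)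
    (hφ : φ ≠ 0) : wedge φ θ ≠ 0 ∨ wedge φ η ≠ 0 := by
  by_contra! hpar
  obtain ⟨hθ, hη⟩ := hpar
  -- Cramer's rule: `(θ ∧ η) φ = (φ ∧ η) θ - (φ ∧ θ) η`.
  have cramer₁ : wedge θ η * φ.1 = wedge φ η * θ.1 - wedge φ θ * η.1 := by unfold wedge; ring
  have cramer₂ : wedge θ η * φ.2 = wedge φ η * θ.2 - wedge φ θ * η.2 := by unfold wedge; ring
  simp only [hθ, hη, zero_mul, sub_self, mul_eq_zero, h, false_or] at cramer₁ cramer₂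
  exact hφ (Prod.ext cramer₁ cramer₂)

end Wedge

namespace MvPolynomial

lemma IsHomogeneous.wedge {σ R : Type*} [CommRing R] {θ η : MvPolynomial σ R × MvPolynomial σ R}
    {a b : ℕ}
    (hθ₁ : θ.1.IsHomogeneous a) (hθ₂ : θ.2.IsHomogeneous a)
    (hη₁ : η.1.IsHomogeneous b) (hη₂ : η.2.IsHomogeneous b) :
    (wedge θ η).IsHomogeneous (a + b) :=
  (hθ₁.mul hη₂).sub (hθ₂.mul hη₁)

end MvPolynomial

section LinearForm

variable {K : Type*} [Field K]

lemma isHomogeneous_linForm (v : K × K) : (linForm v).IsHomogeneous 1 :=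
  (isHomogeneous_C_mul_X v.1 0).add (isHomogeneous_C_mul_X v.2 1)

lemma linForm_ne_zero {v : K × K} (hv : v ≠ 0) : linForm v ≠ 0 := by
  intro h
  have h₁ := congrArg (eval ![1, 0]) h
  have h₂ := congrArg (eval ![0, 1]) h
  simp [linForm] at h₁ h₂
  exact hv (Prod.ext h₁ h₂)

lemma irreducible_linForm {v : K × K} (hv : v ≠ 0) : Irreducible (linForm v) := by
  refine irreducible_of_totalDegree_eq_one
    ((isHomogeneous_linForm v).totalDegree (linForm_ne_zero hv)) fun x hx => ?_
  refine isUnit_iff_ne_zero.mpr fun hx0 => linForm_ne_zero hv (ext _ _ fun i => ?_)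
  simpa [hx0] using hx i

/-- Evaluate at the zero `(v.2, -v.1)` of `linForm v`. -/
lemma mul_eq_mul_of_linForm_dvd {v w : K × K} (h : linForm v ∣ linForm w) :
    v.1 * w.2 = v.2 * w.1 := by
  obtain ⟨r, hr⟩ := h
  have := congrArg (eval ![v.2, -v.1]) hr
  simp [linForm] at this
  linear_combination -this

/-- Both `C v.1 * (θ ∧ η)` and `C v.2 * (θ ∧ η)` are combinations of `θ(α)` and `η(α)`
for `α = linForm v`, and one of `v.1`, `v.2` is a unit. -/
lemma pow_linForm_dvd_wedge {v : K × K} (hv : v ≠ 0) {k : ℕ}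
    {θ η : MvPolynomial (Fin 2) K × MvPolynomial (Fin 2) K}
    (hθ : linForm v ^ k ∣ C v.1 * θ.1 + C v.2 * θ.2)
    (hη : linForm v ^ k ∣ C v.1 * η.1 + C v.2 * η.2) :
    linForm v ^ k ∣ wedge θ η := by
  have h₁ : linForm v ^ k ∣ C v.1 * wedge θ η := by
    have : C v.1 * wedge θ η
        = (C v.1 * θ.1 + C v.2 * θ.2) * η.2 - θ.2 * (C v.1 * η.1 + C v.2 * η.2) := by
      unfold wedge; ring
    exact this ▸ dvd_sub (hθ.mul_right _) (hη.mul_left _)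
  have h₂ : linForm v ^ k ∣ C v.2 * wedge θ η := by
    have : C v.2 * wedge θ η
        = θ.1 * (C v.1 * η.1 + C v.2 * η.2) - (C v.1 * θ.1 + C v.2 * θ.2) * η.1 := by
      unfold wedge; ring
    exact this ▸ dvd_sub (hη.mul_left _) (hθ.mul_right _)
  by_cases h0 : v.1 = 0
  · have h0' : v.2 ≠ 0 := fun h => hv (Prod.ext h0 h)
    exact ((isUnit_iff_ne_zero.mpr h0').map C).dvd_mul_left.mp h₂
  · exact ((isUnit_iff_ne_zero.mpr h0).map C).dvd_mul_left.mp h₁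

end LinearForm

section Arrangement

variable {K : Type*} [Field K] {n : ℕ} {co : Fin n → K × K} {m m' : Fin n → ℕ}

lemma MemD.mono (hmm' : m ≤ m') {θ : MvPolynomial (Fin 2) K × MvPolynomial (Fin 2) K}
    (hθ : MemD co m' θ) : MemD co m θ :=
  fun i => (pow_dvd_pow _ (hmm' i)).trans (hθ i)

lemma Qpoly_ne_zero (hne : ∀ i, co i ≠ 0) : Qpoly co m ≠ 0 :=
  Finset.prod_ne_zero_iff.mpr fun i _ => pow_ne_zero _ (linForm_ne_zero (hne i))

lemma isHomogeneous_Qpoly : (Qpoly co m).IsHomogeneous (∑ i, m i) :=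
  IsHomogeneous.prod _ _ _ fun i _ => by
    have := (isHomogeneous_linForm (co i)).pow (m i)
    rwa [one_mul] at this

/-- The easy half of Saito's criterion; the factors `α_H ^ m(H)` of `Q` are pairwise
relatively prime because distinct lines are not proportional. -/
lemma Qpoly_dvd_wedge (hne : ∀ i, co i ≠ 0)
    (hdist : ∀ i j, i ≠ j → (co i).1 * (co j).2 ≠ (co i).2 * (co j).1)
    {θ η : MvPolynomial (Fin 2) K × MvPolynomial (Fin 2) K}
    (hθ : MemD co m θ) (hη : MemD co m η) : Qpoly co m ∣ wedge θ η :=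
  Fintype.prod_dvd_of_isRelPrime (s := fun i => linForm (co i) ^ m i)
    (fun i j hij => (((irreducible_linForm (hne i)).isRelPrime_iff_not_dvd.mpr
      fun h => hdist i j hij (mul_eq_mul_of_linForm_dvd h)).pow_left).pow_right)
    fun i => pow_linForm_dvd_wedge (hne i) (hθ i) (hη i)

lemma sum_le_add_of_wedge_ne_zero (hne : ∀ i, co i ≠ 0)
    (hdist : ∀ i j, i ≠ j → (co i).1 * (co j).2 ≠ (co i).2 * (co j).1)
    {θ η : MvPolynomial (Fin 2) K × MvPolynomial (Fin 2) K} {a b : ℕ}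
    (hθ : MemD co m θ) (hη : MemD co m η)
    (hθ₁ : θ.1.IsHomogeneous a) (hθ₂ : θ.2.IsHomogeneous a)
    (hη₁ : η.1.IsHomogeneous b) (hη₂ : η.2.IsHomogeneous b)
    (hw : wedge θ η ≠ 0) : ∑ i, m i ≤ a + b :=
  calc ∑ i, m i = (Qpoly co m).totalDegree :=
        (isHomogeneous_Qpoly.totalDegree (Qpoly_ne_zero hne)).symm
    _ ≤ (wedge θ η).totalDegree :=
        totalDegree_le_of_dvd_of_isDomain (Qpoly_dvd_wedge hne hdist hθ hη) hw
    _ = a + b := (IsHomogeneous.wedge hθ₁ hθ₂ hη₁ hη₂).totalDegree hw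

namespace IsExp

variable {d₁ d₂ : ℕ}

lemma symm (h : IsExp co m d₁ d₂) : IsExp co m d₂ d₁ := by
  obtain ⟨θ₁, θ₂, hθ₁, hθ₂, h₁₁, h₁₂, h₂₁, h₂₂, c, hc, hdet⟩ := h
  refine ⟨θ₂, θ₁, hθ₂, hθ₁, h₂₁, h₂₂, h₁₁, h₁₂, -c, neg_ne_zero.mpr hc, ?_⟩
  rw [map_neg, neg_mul, ← hdet]
  ring

lemma exists_wedge_ne_zero (hne : ∀ i, co i ≠ 0) (h : IsExp co m d₁ d₂) :
    ∃ θ₁ θ₂ : MvPolynomial (Fin 2) K × MvPolynomial (Fin 2) K,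
      MemD co m θ₁ ∧ MemD co m θ₂ ∧
      θ₁.1.IsHomogeneous d₁ ∧ θ₁.2.IsHomogeneous d₁ ∧
      θ₂.1.IsHomogeneous d₂ ∧ θ₂.2.IsHomogeneous d₂ ∧ wedge θ₁ θ₂ ≠ 0 := by
  obtain ⟨θ₁, θ₂, hθ₁, hθ₂, h₁₁, h₁₂, h₂₁, h₂₂, c, hc, hdet : wedge θ₁ θ₂ = _⟩ := h
  exact ⟨θ₁, θ₂, hθ₁, hθ₂, h₁₁, h₁₂, h₂₁, h₂₂,
    hdet ▸ mul_ne_zero (C_ne_zero.mpr hc) (Qpoly_ne_zero hne)⟩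

lemma add_eq_sum (hne : ∀ i, co i ≠ 0) (h : IsExp co m d₁ d₂) : d₁ + d₂ = ∑ i, m i := by
  obtain ⟨θ₁, θ₂, -, -, h₁₁, h₁₂, h₂₁, h₂₂, c, hc, hdet : wedge θ₁ θ₂ = _⟩ := h
  have hQ : (C c * Qpoly co m).IsHomogeneous (∑ i, m i) := by
    simpa using (isHomogeneous_C _ c).mul isHomogeneous_Qpoly
  exact (IsHomogeneous.wedge h₁₁ h₁₂ h₂₁ h₂₂).inj_right (hdet ▸ hQ)
    (hdet ▸ mul_ne_zero (C_ne_zero.mpr hc) (Qpoly_ne_zero hne))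

lemma exists_memD_ne_zero (hne : ∀ i, co i ≠ 0) (h : IsExp co m d₁ d₂) :
    ∃ θ, MemD co m θ ∧ θ ≠ 0 ∧ θ.1.IsHomogeneous d₁ ∧ θ.2.IsHomogeneous d₁ := by
  obtain ⟨θ₁, θ₂, hθ₁, -, h₁₁, h₁₂, -, -, hw⟩ := h.exists_wedge_ne_zero hne
  refine ⟨θ₁, hθ₁, ?_, h₁₁, h₁₂⟩
  rintro rfl
  exact hw (by simp [wedge])

/-- A nonzero homogeneous logarithmic derivation for `m` cannot be parallel to both members
of a basis for a multiplicity `m' ≥ m`, which bounds its degree from below. -/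
lemma sum_le_add_max (hne : ∀ i, co i ≠ 0)
    (hdist : ∀ i j, i ≠ j → (co i).1 * (co j).2 ≠ (co i).2 * (co j).1)
    (h : IsExp co m' d₁ d₂) (hmm' : m ≤ m')
    {φ : MvPolynomial (Fin 2) K × MvPolynomial (Fin 2) K} {e : ℕ} (hφ : MemD co m φ)
    (hφ0 : φ ≠ 0) (hφ₁ : φ.1.IsHomogeneous e) (hφ₂ : φ.2.IsHomogeneous e) :
    ∑ i, m i ≤ e + max d₁ d₂ := by
  obtain ⟨θ₁, θ₂, hθ₁, hθ₂, h₁₁, h₁₂, h₂₁, h₂₂, hw⟩ := h.exists_wedge_ne_zero hne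
  rcases wedge_ne_zero_or_wedge_ne_zero hw hφ0 with hw₁ | hw₂
  · have := sum_le_add_of_wedge_ne_zero hne hdist hφ (hθ₁.mono hmm') hφ₁ hφ₂ h₁₁ h₁₂ hw₁
    omega
  · have := sum_le_add_of_wedge_ne_zero hne hdist hφ (hθ₂.mono hmm') hφ₁ hφ₂ h₂₁ h₂₂ hw₂
    omega

end IsExp

end Arrangement

theorem stmt_8_general {K : Type*} [Field K] (n : ℕ)
    (co : Fin n → K × K) (m : Fin n → ℕ)
    (hne : ∀ i, co i ≠ 0)
    (hdist : ∀ i j, i ≠ j → (co i).1 * (co j).2 ≠ (co i).2 * (co j).1)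
    (H : Fin n) (d₁ d₂ e₁ e₂ : ℕ)
    (h₁ : IsExp co m d₁ d₂)
    (h₂ : IsExp co (Function.update m H (m H + 1)) e₁ e₂) :
    |(|(d₁ : ℤ) - (d₂ : ℤ)|) - (|(e₁ : ℤ) - (e₂ : ℤ)|)| = 1 := by
  have hmH : Function.update m H (m H + 1) = m + Pi.single H 1 := by
    ext i
    rcases eq_or_ne i H with rfl | hi <;> simp [*]
  rw [hmH] at h₂
  have hmm' : m ≤ m + Pi.single H 1 := fun _ => Nat.le_add_right _ _
  have hd := h₁.add_eq_sum hne
  have he := h₂.add_eq_sum hne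
  simp only [Pi.add_apply, Finset.sum_add_distrib, Finset.sum_pi_single', Finset.mem_univ,
    if_true] at he
  obtain ⟨θ₁, hθ₁, hθ₁0, h₁₁, h₁₂⟩ := h₁.exists_memD_ne_zero hne
  obtain ⟨θ₂, hθ₂, hθ₂0, h₂₁, h₂₂⟩ := h₁.symm.exists_memD_ne_zero hne
  obtain ⟨φ₁, hφ₁, hφ₁0, g₁₁, g₁₂⟩ := h₂.exists_memD_ne_zero hne
  obtain ⟨φ₂, hφ₂, hφ₂0, g₂₁, g₂₂⟩ := h₂.symm.exists_memD_ne_zero hne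
  -- With `N = ∑ m i`, the smaller exponent and the larger one each grow by `0` or `1`,
  -- and exactly one of them grows since the sums are `N` and `N + 1`.
  have := h₁.sum_le_add_max hne hdist le_rfl (hφ₁.mono hmm') hφ₁0 g₁₁ g₁₂
  have := h₁.sum_le_add_max hne hdist le_rfl (hφ₂.mono hmm') hφ₂0 g₂₁ g₂₂
  have := h₂.sum_le_add_max hne hdist hmm' hθ₁ hθ₁0 h₁₁ h₁₂
  have := h₂.sum_le_add_max hne hdist hmm' hθ₂ hθ₂0 h₂₁ h₂₂
  grind

/-- For a 2-multiarrangement `(A, m)` and `H ∈ A`, if `(A, m)` has exponents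
`(d₁, d₂)` and `(A, m + δ_H)` (the multiplicity increased by `1` on `H`) has exponents
`(e₁, e₂)`, then `|Δ(A,m) - Δ(A, m + δ_H)| = 1`, where `Δ = |d₁ - d₂|`.  In particular, if
`Δ(A,m) = 0` then `Δ(A, m ± δ_H) = 1` for every `H ∈ A`. -/
theorem stmt_8 {K : Type*} [Field K] [CharZero K] (n : ℕ)
    (co : Fin n → K × K) (m : Fin n → ℕ)
    (hne : ∀ i, co i ≠ 0)
    (hdist : ∀ i j, i ≠ j → (co i).1 * (co j).2 ≠ (co i).2 * (co j).1)
    (hm : ∀ i, 0 < m i)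
    (H : Fin n) (d₁ d₂ e₁ e₂ : ℕ)
    (h₁ : IsExp co m d₁ d₂)
    (h₂ : IsExp co (Function.update m H (m H + 1)) e₁ e₂) :
    |(|(d₁ : ℤ) - (d₂ : ℤ)|) - (|(e₁ : ℤ) - (e₂ : ℤ)|)| = 1 :=
  stmt_8_general n co m hne hdist H d₁ d₂ e₁ e₂ h₁ h₂

end
end

section
/- Let (A,m) be a balanced multiarrangement defined by x^{m₁} y^{m₂} (x−y)^{m₃} over a field of characteristic zero. Then Δ(A,m) ≤ 1; i.e., if |m| is even then exp(A,m) = (|m|/2, |m|/2), and if |m| is odd then exp(A,m) = ((|m|−1)/2, (|m|+1)/2). -/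
open MvPolynomial

noncomputable section

open Finset

/-!
The two basis derivations are written down explicitly. A derivation `f ∂_x + g ∂_y` lies in
`D(A,m)` iff `x^a ∣ f`, `y^b ∣ g` and `(x-y)^c ∣ f - g`. In degree `d`, apply to
`(x-y)^{c'} y^{d-c'}` the operators `x ∂_x - m` for the `m` in the gap `d - b < m < σ`: each one
kills the monomial `x^m y^{d-m}`, rescales the other monomials, and costs at most one factor
`x - y`. With `c' = c + #gap` the result `h` is still divisible by `(x-y)^c` and has no monomial
in the gap, so `h = f - g` with `x^σ ∣ f` and `y^b ∣ g`. Balancedness makes this work for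
`(d, σ) = (d₁, a)` and `(d₂, a + 1)`. The determinant of the two derivations is divisible by
`Q = x^a y^b (x-y)^c` and homogeneous of the same degree, hence a scalar multiple of `Q`; the
scalar is nonzero because on the line `y = 1` the coefficient of `x^a` in the determinant is a
product of two nonzero coefficients of the form above.
-/

theorem mul_pow_dvd_of_prime {M : Type*} [CommMonoidWithZero M] [IsCancelMulZero M]
    {p q w : M} {n : ℕ} (hq : Prime q) (hqp : ¬q ∣ p) (hp : p ∣ w) (hqw : q ^ n ∣ w) :
    p * q ^ n ∣ w := by
  obtain ⟨u, rfl⟩ := hp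
  exact mul_dvd_mul_left p (hq.pow_dvd_of_dvd_mul_left n hqp hqw)

theorem Derivation.pow_dvd_apply_of_pow_succ_dvd {R A : Type*} [CommSemiring R] [CommSemiring A]
    [Algebra R A] (D : Derivation R A A) {p a : A} {k : ℕ} (h : p ^ (k + 1) ∣ a) :
    p ^ k ∣ D a := by
  obtain ⟨b, rfl⟩ := h
  rw [D.leibniz, D.leibniz_pow, Nat.add_sub_cancel, smul_eq_mul, smul_eq_mul, nsmul_eq_mul]
  exact dvd_add (Dvd.intro (p * D b) (by ring)) (Dvd.intro (b * (k + 1 : ℕ) * D p) (by ring))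

theorem Polynomial.coeff_mul_of_X_pow_dvd {R : Type*} [CommSemiring R] {p : Polynomial R} {n : ℕ}
    (hp : Polynomial.X ^ n ∣ p) (q : Polynomial R) :
    (p * q).coeff n = p.coeff n * q.coeff 0 := by
  obtain ⟨r, rfl⟩ := hp
  rw [mul_assoc, coeff_X_pow_mul', coeff_X_pow_mul', if_pos le_rfl, Nat.sub_self, mul_coeff_zero]
  simp

theorem Polynomial.mul_sub_mul_ne_zero_of_X_pow_dvd {R : Type*} [CommRing R] [IsDomain R]
    {p q r s : Polynomial R} {n : ℕ} (hp : Polynomial.X ^ n ∣ p) (hpn : p.coeff n ≠ 0)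
    (hq : q.coeff 0 ≠ 0) (hs : Polynomial.X ^ (n + 1) ∣ s) : p * q - r * s ≠ 0 := by
  intro h
  have hn := congrArg (coeff · n) h
  simp only [coeff_sub, coeff_mul_of_X_pow_dvd hp, coeff_zero, sub_zero,
    X_pow_dvd_iff.1 (dvd_mul_of_dvd_right hs r) n n.lt_succ_self] at hn
  exact mul_ne_zero hpn hq hn

namespace MvPolynomial

theorem not_dvd_of_eval_eq_zero {R σ : Type*} [CommRing R] {p q : MvPolynomial σ R}
    (v : σ → R) (hp : eval v p = 0) (hq : eval v q ≠ 0) : ¬p ∣ q := by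
  rintro ⟨r, rfl⟩
  simp [hp] at hq

variable {R : Type*} [CommRing R] [IsDomain R]

theorem prime_X_zero_sub_X_succ {n : ℕ} (i : Fin n) :
    Prime (X 0 - X i.succ : MvPolynomial (Fin (n + 1)) R) := by
  rw [← MulEquiv.prime_iff (finSuccEquiv R n).toMulEquiv]
  convert Polynomial.prime_X_sub_C (X i : MvPolynomial (Fin n) R)
  simp [finSuccEquiv_X_zero, finSuccEquiv_X_succ]

theorem eq_C_mul_of_dvd_of_isHomogeneous {σ : Type*} {n : ℕ} {P Q : MvPolynomial σ R}
    (hP : P.IsHomogeneous n) (hQ : Q.IsHomogeneous n) (hP0 : P ≠ 0) (h : P ∣ Q) :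
    ∃ r : R, Q = C r * P := by
  obtain ⟨V, rfl⟩ := h
  rcases eq_or_ne V 0 with rfl | hV
  · exact ⟨0, by simp⟩
  have hdeg := totalDegree_mul_of_isDomain hP0 hV
  rw [hQ.totalDegree (mul_ne_zero hP0 hV), hP.totalDegree hP0] at hdeg
  refine ⟨V.coeff 0, ?_⟩
  rw [mul_comm, ← totalDegree_eq_zero_iff_eq_C.1 (by omega)]

end MvPolynomial

section BinaryForm

variable {R : Type*} [CommRing R]

def binaryForm (d : ℕ) (k : ℕ → R) : MvPolynomial (Fin 2) R :=
  ∑ j ∈ range (d + 1), C (k j) * X 0 ^ j * X 1 ^ (d - j)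

theorem isHomogeneous_binaryForm (d : ℕ) (k : ℕ → R) : (binaryForm d k).IsHomogeneous d := by
  refine IsHomogeneous.sum _ _ _ fun j hj => ?_
  have h := ((isHomogeneous_C _ (k j)).mul (isHomogeneous_X_pow (0 : Fin 2) j)).mul
    (isHomogeneous_X_pow 1 (d - j))
  rwa [zero_add, Nat.add_sub_cancel' (Nat.lt_succ_iff.1 (mem_range.1 hj))] at h

theorem binaryForm_congr {d : ℕ} {k l : ℕ → R} (h : ∀ j ≤ d, k j = l j) :
    binaryForm d k = binaryForm d l :=
  sum_congr rfl fun j hj => by rw [h j (Nat.lt_succ_iff.1 (mem_range.1 hj))]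

theorem binaryForm_add (d : ℕ) (k l : ℕ → R) :
    binaryForm d (k + l) = binaryForm d k + binaryForm d l := by
  simp only [binaryForm, ← sum_add_distrib, Pi.add_apply, map_add, add_mul]

theorem X_zero_pow_dvd_binaryForm {d n : ℕ} {k : ℕ → R} (hk : ∀ j < n, k j = 0) :
    X 0 ^ n ∣ binaryForm d k := by
  refine dvd_sum fun j _ => ?_
  rcases lt_or_ge j n with hj | hj
  · simp [hk j hj]
  · exact ((pow_dvd_pow _ hj).mul_left _).mul_right _

theorem X_one_pow_dvd_binaryForm {d n : ℕ} {k : ℕ → R} (hk : ∀ j, d < j + n → k j = 0) :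
    X 1 ^ n ∣ binaryForm d k := by
  refine dvd_sum fun j _ => ?_
  by_cases hjn : d < j + n
  · simp [hk j hjn]
  · exact (pow_dvd_pow _ (by omega)).mul_left _

theorem coeff_aeval_binaryForm (d : ℕ) (k : ℕ → R) (j : ℕ) :
    (aeval ![Polynomial.X, 1] (binaryForm d k)).coeff j = if j ≤ d then k j else 0 := by
  simp [binaryForm, Polynomial.coeff_C_mul, Polynomial.coeff_X_pow]

theorem X_mul_pderiv_sub_C_mul_binaryForm (d : ℕ) (k : ℕ → R) (r : R) :
    X 0 * pderiv 0 (binaryForm d k) - C r * binaryForm d k =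
      binaryForm d fun j => ((j : R) - r) * k j := by
  simp only [binaryForm, map_sum, mul_sum, ← sum_sub_distrib]
  refine sum_congr rfl fun j _ => ?_
  rcases j with _ | j <;> simp <;> ring

theorem sub_pow_mul_X_pow_eq_binaryForm {c d : ℕ} (hcd : c ≤ d) :
    (X 0 - X 1 : MvPolynomial (Fin 2) R) ^ c * X 1 ^ (d - c) =
      binaryForm d fun j => (-1 : R) ^ (c + j) * c.choose j := by
  rw [sub_eq_add_neg, add_pow, sum_mul, binaryForm,
    ← sum_subset (range_subset_range.2 (by omega : c + 1 ≤ d + 1)) fun j _ hj => by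
      simp [Nat.choose_eq_zero_of_lt (show c < j by simpa using hj)]]
  refine sum_congr rfl fun j hj => ?_
  obtain ⟨i, rfl⟩ := Nat.exists_eq_add_of_le (Nat.lt_succ_iff.1 (mem_range.1 hj))
  rw [neg_pow, Nat.add_sub_cancel_left, show j + i + j = i + 2 * j by ring, pow_add _ i, pow_mul,
    neg_one_sq, one_pow, mul_one, show d - j = i + (d - (j + i)) by omega, pow_add]
  simp only [map_mul, map_pow, map_neg, map_one, map_natCast]
  ring

/-- `binaryForm d (gapCoeff c S) = ∏ m ∈ S, (x ∂_x - m) ((x - y)^c y^(d - c))`. -/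
def gapCoeff (c : ℕ) (S : Finset ℕ) (j : ℕ) : R :=
  (-1) ^ (c + j) * c.choose j * ∏ m ∈ S, ((j : R) - m)

theorem gapCoeff_eq_zero {c j : ℕ} {S : Finset ℕ} (hjS : j ∈ S) : gapCoeff (R := R) c S j = 0 :=
  mul_eq_zero_of_right _ (prod_eq_zero hjS (sub_self _))

theorem gapCoeff_ne_zero [IsDomain R] [CharZero R] {c j : ℕ} {S : Finset ℕ} (hjS : j ∉ S)
    (hjc : j ≤ c) : gapCoeff (R := R) c S j ≠ 0 := by
  refine mul_ne_zero (mul_ne_zero (pow_ne_zero _ (neg_ne_zero.2 one_ne_zero)) ?_) ?_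
  · exact Nat.cast_ne_zero.2 (Nat.choose_pos hjc).ne'
  · exact prod_ne_zero_iff.2 fun m hm => sub_ne_zero.2 <| Nat.cast_injective.ne <| by
      rintro rfl; exact hjS hm

theorem sub_pow_dvd_binaryForm_gapCoeff {c d : ℕ} (hcd : c ≤ d) (S : Finset ℕ) :
    (X 0 - X 1 : MvPolynomial (Fin 2) R) ^ (c - #S) ∣ binaryForm d (gapCoeff c S) := by
  induction S using Finset.induction_on with
  | empty =>
    have hcoeff : gapCoeff c ∅ = fun j : ℕ => (-1 : R) ^ (c + j) * c.choose j := by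
      ext j
      simp [gapCoeff]
    rw [hcoeff, ← sub_pow_mul_X_pow_eq_binaryForm hcd, card_empty, Nat.sub_zero]
    exact dvd_mul_right _ _
  | insert m S hm ih =>
    have hcoeff : gapCoeff c (insert m S) = fun j : ℕ => ((j : R) - m) * gapCoeff c S j := by
      ext j
      simp only [gapCoeff, prod_insert hm]
      ring
    rw [hcoeff, ← X_mul_pderiv_sub_C_mul_binaryForm, card_insert_of_notMem hm]
    cases he : c - #S with
    | zero => simp [show c - (#S + 1) = 0 by omega]
    | succ e =>
      rw [he] at ih
      rw [show c - (#S + 1) = e by omega]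
      exact dvd_sub (((pderiv 0).pow_dvd_apply_of_pow_succ_dvd ih).mul_left _)
        (((pow_dvd_pow _ e.le_succ).trans ih).mul_left _)

def splitDerivation (d σ b : ℕ) (k : ℕ → R) : MvPolynomial (Fin 2) R × MvPolynomial (Fin 2) R :=
  (binaryForm d fun j => if σ ≤ j then k j else 0,
    -binaryForm d fun j => if j + b ≤ d then k j else 0)

variable {d σ b : ℕ} {k : ℕ → R}

theorem splitDerivation_fst_sub_snd (hσb : d < σ + b)
    (hk : ∀ j, d < j + b → j < σ → k j = 0) :
    (splitDerivation d σ b k).1 - (splitDerivation d σ b k).2 = binaryForm d k := by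
  rw [splitDerivation, sub_neg_eq_add, ← binaryForm_add]
  refine binaryForm_congr fun j _ => ?_
  simp only [Pi.add_apply]
  split_ifs with h₁ h₂ h₂
  · omega
  · rw [add_zero]
  · rw [zero_add]
  · rw [add_zero, hk j (by omega) (by omega)]

theorem X_zero_pow_dvd_splitDerivation_fst : X 0 ^ σ ∣ (splitDerivation d σ b k).1 :=
  X_zero_pow_dvd_binaryForm fun _ hj => if_neg (by omega)

theorem X_one_pow_dvd_splitDerivation_snd : X 1 ^ b ∣ (splitDerivation d σ b k).2 :=
  dvd_neg.2 <| X_one_pow_dvd_binaryForm fun _ hj => if_neg (by omega)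

theorem isHomogeneous_splitDerivation :
    (splitDerivation d σ b k).1.IsHomogeneous d ∧ (splitDerivation d σ b k).2.IsHomogeneous d :=
  ⟨isHomogeneous_binaryForm _ _, (isHomogeneous_binaryForm _ _).neg⟩

end BinaryForm

section ThreeLines

abbrev threeLines (K : Type*) [Field K] : Fin 3 → K × K := ![((1 : K), 0), (0, 1), (1, -1)]

variable {K : Type*} [Field K]

theorem memD_threeLines_iff {a b c : ℕ} {θ : MvPolynomial (Fin 2) K × MvPolynomial (Fin 2) K} :
    MemD (threeLines K) ![a, b, c] θ ↔
      X 0 ^ a ∣ θ.1 ∧ X 1 ^ b ∣ θ.2 ∧ (X 0 - X 1) ^ c ∣ θ.1 - θ.2 := by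
  simp [MemD, Fin.forall_fin_succ, sub_eq_add_neg]

theorem qpoly_threeLines (a b c : ℕ) :
    Qpoly (threeLines K) ![a, b, c] = X 0 ^ a * X 1 ^ b * (X 0 - X 1) ^ c := by
  simp [Qpoly, Fin.prod_univ_three, sub_eq_add_neg]

theorem isExp_threeLines_of_det_ne_zero {a b c d₁ d₂ : ℕ}
    {θ₁ θ₂ : MvPolynomial (Fin 2) K × MvPolynomial (Fin 2) K}
    (hθ₁ : MemD (threeLines K) ![a, b, c] θ₁) (hθ₂ : MemD (threeLines K) ![a, b, c] θ₂)
    (hom₁ : θ₁.1.IsHomogeneous d₁ ∧ θ₁.2.IsHomogeneous d₁)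
    (hom₂ : θ₂.1.IsHomogeneous d₂ ∧ θ₂.2.IsHomogeneous d₂) (hd : d₁ + d₂ = a + b + c)
    (hW : θ₁.1 * θ₂.2 - θ₁.2 * θ₂.1 ≠ 0) :
    IsExp (threeLines K) ![a, b, c] d₁ d₂ := by
  obtain ⟨hx₁, hy₁, hxy₁⟩ := memD_threeLines_iff.1 hθ₁
  obtain ⟨hx₂, hy₂, hxy₂⟩ := memD_threeLines_iff.1 hθ₂
  have hQW : Qpoly (threeLines K) ![a, b, c] ∣ θ₁.1 * θ₂.2 - θ₁.2 * θ₂.1 := by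
    rw [qpoly_threeLines]
    refine mul_pow_dvd_of_prime (prime_X_zero_sub_X_succ 0) ?_
      (mul_pow_dvd_of_prime (X_prime (i := 1)) ?_ ?_ ?_) ?_
    · exact not_dvd_of_eval_eq_zero ![1, 1] (by simp) (by simp)
    · exact not_dvd_of_eval_eq_zero ![1, 0] (by simp) (by simp)
    · exact dvd_sub (hx₁.mul_right _) (hx₂.mul_left _)
    · exact dvd_sub (hy₂.mul_left _) (hy₁.mul_right _)
    · rw [show θ₁.1 * θ₂.2 - θ₁.2 * θ₂.1 = (θ₁.1 - θ₁.2) * θ₂.1 - θ₁.1 * (θ₂.1 - θ₂.2) by ring]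
      exact dvd_sub (hxy₁.mul_right _) (hxy₂.mul_left _)
  have hQ : (Qpoly (threeLines K) ![a, b, c]).IsHomogeneous (d₁ + d₂) := by
    rw [qpoly_threeLines, hd]
    simpa using ((isHomogeneous_X_pow (0 : Fin 2) a).mul (isHomogeneous_X_pow 1 b)).mul
      (((isHomogeneous_X K (0 : Fin 2)).sub (isHomogeneous_X K 1)).pow c)
  obtain ⟨κ, hκ⟩ := eq_C_mul_of_dvd_of_isHomogeneous hQ
    ((hom₁.1.mul hom₂.2).sub (hom₁.2.mul hom₂.1)) (ne_zero_of_dvd_ne_zero hW hQW) hQW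
  refine ⟨θ₁, θ₂, hθ₁, hθ₂, hom₁.1, hom₁.2, hom₂.1, hom₂.2, κ, ?_, hκ⟩
  rintro rfl
  exact hW (by simpa using hκ)

/-- The gap is `Ico (d + 1 - b) σ`, the exponents `j ≤ d` with `x^σ ∤ x^j` and `y^b ∤ y^(d-j)`. -/
def balancedDerivation (b c d σ : ℕ) : MvPolynomial (Fin 2) K × MvPolynomial (Fin 2) K :=
  splitDerivation d σ b (gapCoeff (c + #(Ico (d + 1 - b) σ)) (Ico (d + 1 - b) σ))

theorem memD_balancedDerivation {a b c d σ : ℕ} (hσb : d < σ + b) (haσ : a ≤ σ)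
    (hcd : c + (σ - (d + 1 - b)) ≤ d) :
    MemD (threeLines K) ![a, b, c] (balancedDerivation b c d σ) := by
  refine memD_threeLines_iff.2 ⟨(pow_dvd_pow _ haσ).trans X_zero_pow_dvd_splitDerivation_fst,
    X_one_pow_dvd_splitDerivation_snd, ?_⟩
  rw [balancedDerivation, splitDerivation_fst_sub_snd hσb fun j h₁ h₂ =>
    gapCoeff_eq_zero (mem_Ico.2 ⟨by omega, h₂⟩)]
  have h := sub_pow_dvd_binaryForm_gapCoeff (R := K) (c := c + #(Ico (d + 1 - b) σ)) (d := d)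
    (by rwa [Nat.card_Ico]) (Ico (d + 1 - b) σ)
  rwa [Nat.add_sub_cancel] at h

theorem isExp_of_balanced [CharZero K] {a b c d₁ d₂ : ℕ} (hd : d₁ + d₂ = a + b + c)
    (hd₁₂ : d₁ ≤ d₂) (hd₂₁ : d₂ ≤ d₁ + 1) (ha : 2 * a < a + b + c) (hb : 2 * b < a + b + c)
    (hc : 2 * c < a + b + c) :
    IsExp (threeLines K) ![a, b, c] d₁ d₂ := by
  refine isExp_threeLines_of_det_ne_zero (θ₁ := balancedDerivation b c d₁ a)
    (θ₂ := balancedDerivation b c d₂ (a + 1))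
    (memD_balancedDerivation (by omega) le_rfl (by omega))
    (memD_balancedDerivation (by omega) (by omega) (by omega))
    isHomogeneous_splitDerivation isHomogeneous_splitDerivation hd fun hW => ?_
  refine Polynomial.mul_sub_mul_ne_zero_of_X_pow_dvd (n := a) ?_ ?_ ?_ ?_
    (by simpa using congrArg (aeval ![(Polynomial.X : Polynomial K), 1]) hW)
  · exact Polynomial.X_pow_dvd_iff.2 fun j hj => by
      simp [balancedDerivation, splitDerivation, coeff_aeval_binaryForm, hj.not_ge]
  · rw [balancedDerivation, splitDerivation, coeff_aeval_binaryForm, if_pos (by omega),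
      if_pos le_rfl]
    exact gapCoeff_ne_zero (by simp) (by simp; omega)
  · rw [balancedDerivation, splitDerivation, map_neg, Polynomial.coeff_neg,
      coeff_aeval_binaryForm, if_pos (Nat.zero_le _), if_pos (by omega), neg_ne_zero]
    exact gapCoeff_ne_zero (by simp; omega) (Nat.zero_le _)
  · exact Polynomial.X_pow_dvd_iff.2 fun j hj => by
      simp [balancedDerivation, splitDerivation, coeff_aeval_binaryForm,
        (Nat.lt_succ_iff.1 hj).not_gt]

end ThreeLines

theorem stmt_13_general {K : Type*} [Field K] [CharZero K] (m₁ m₂ m₃ : ℕ)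
    (hbal₁ : 2 * m₁ < m₁ + m₂ + m₃) (hbal₂ : 2 * m₂ < m₁ + m₂ + m₃)
    (hbal₃ : 2 * m₃ < m₁ + m₂ + m₃) :
    ((m₁ + m₂ + m₃) % 2 = 0 →
      IsExp (![((1 : K), 0), (0, 1), (1, -1)]) ![m₁, m₂, m₃]
        ((m₁ + m₂ + m₃) / 2) ((m₁ + m₂ + m₃) / 2)) ∧
    ((m₁ + m₂ + m₃) % 2 = 1 →
      IsExp (![((1 : K), 0), (0, 1), (1, -1)]) ![m₁, m₂, m₃]
        ((m₁ + m₂ + m₃ - 1) / 2) ((m₁ + m₂ + m₃ + 1) / 2)) :=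
  ⟨fun _ => isExp_of_balanced (by omega) le_rfl (by omega) hbal₁ hbal₂ hbal₃,
    fun _ => isExp_of_balanced (by omega) (by omega) (by omega) hbal₁ hbal₂ hbal₃⟩

/-- For a balanced multiarrangement defined by `x^{m₁} y^{m₂} (x-y)^{m₃}`
over a field of characteristic zero, `Δ(A,m) ≤ 1`: if `|m|` is even then
`exp(A,m) = (|m|/2, |m|/2)`, and if `|m|` is odd then
`exp(A,m) = ((|m|-1)/2, (|m|+1)/2)`. -/
theorem stmt_13 {K : Type*} [Field K] [CharZero K] (m₁ m₂ m₃ : ℕ)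
    (h₁ : 0 < m₁) (h₂ : 0 < m₂) (h₃ : 0 < m₃)
    (hbal₁ : 2 * m₁ < m₁ + m₂ + m₃) (hbal₂ : 2 * m₂ < m₁ + m₂ + m₃)
    (hbal₃ : 2 * m₃ < m₁ + m₂ + m₃) :
    ((m₁ + m₂ + m₃) % 2 = 0 →
      IsExp (![((1 : K), 0), (0, 1), (1, -1)]) ![m₁, m₂, m₃]
        ((m₁ + m₂ + m₃) / 2) ((m₁ + m₂ + m₃) / 2)) ∧
    ((m₁ + m₂ + m₃) % 2 = 1 →
      IsExp (![((1 : K), 0), (0, 1), (1, -1)]) ![m₁, m₂, m₃]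
        ((m₁ + m₂ + m₃ - 1) / 2) ((m₁ + m₂ + m₃ + 1) / 2)) :=
  stmt_13_general m₁ m₂ m₃ hbal₁ hbal₂ hbal₃

end
end
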